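/- For all n ≥ 1, the polynomial C_{2n}(x) = Σ_{σ ∈ DU_{2n}} x^{mmp^{(1,0,0,0)}(σ)} satisfies C_{2n}(x) = Σ_{k=0}^{n-1} C(2n-1, 2k) · A_{2k}(1) · x^{2k} · B_{2n-2k-1}(x), where A_{2k}(1) = |UD_{2k}| = |DU_{2k}| and B_m(x) = Σ_{σ ∈ UD_m} x^{mmp^{(1,0,0,0)}(σ)}. -/
import Mathlib


open Finset

/-- Number of indices `i` such that there exists `j > i` with `σ j > σ i`
    (the statistic mmp^{(1,0,0,0)}). -/
noncomputable def mmp1000 {n : ℕ} (σ : Equiv.Perm (Fin n)) : ℕ :=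
  (Finset.univ.filter (fun i : Fin n => ∃ j : Fin n, i < j ∧ σ i < σ j)).card

/-- Number of indices `i` such that there exists `j < i` with `σ j > σ i`
    (the statistic mmp^{(0,1,0,0)}). -/
noncomputable def mmp0100 {n : ℕ} (σ : Equiv.Perm (Fin n)) : ℕ :=
  (Finset.univ.filter (fun i : Fin n => ∃ j : Fin n, j < i ∧ σ i < σ j)).card

/-- Number of indices `i` such that there exists `j > i` with `σ j < σ i`
    (the statistic mmp^{(0,0,0,1)}). -/
noncomputable def mmp0001 {n : ℕ} (σ : Equiv.Perm (Fin n)) : ℕ :=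
  (Finset.univ.filter (fun i : Fin n => ∃ j : Fin n, i < j ∧ σ j < σ i)).card

/-- σ is up-down: σ(1) < σ(2) > σ(3) < σ(4) > ⋯ (0-indexed: ascent at even indices). -/
def IsUpDown {n : ℕ} (σ : Equiv.Perm (Fin n)) : Prop :=
  ∀ i : Fin n, ∀ h : (i : ℕ) + 1 < n,
    if (i : ℕ) % 2 = 0 then σ i < σ ⟨(i : ℕ) + 1, h⟩ else σ ⟨(i : ℕ) + 1, h⟩ < σ i

/-- σ is down-up: σ(1) > σ(2) < σ(3) > σ(4) < ⋯ (0-indexed: descent at even indices). -/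
def IsDownUp {n : ℕ} (σ : Equiv.Perm (Fin n)) : Prop :=
  ∀ i : Fin n, ∀ h : (i : ℕ) + 1 < n,
    if (i : ℕ) % 2 = 0 then σ ⟨(i : ℕ) + 1, h⟩ < σ i else σ i < σ ⟨(i : ℕ) + 1, h⟩

open scoped Classical in
/-- The set of up-down permutations of length `m`. -/
noncomputable def UDset (m : ℕ) : Finset (Equiv.Perm (Fin m)) :=
  Finset.univ.filter (fun σ => IsUpDown σ)

open scoped Classical in
/-- The set of down-up permutations of length `m`. -/
noncomputable def DUset (m : ℕ) : Finset (Equiv.Perm (Fin m)) :=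
  Finset.univ.filter (fun σ => IsDownUp σ)

/-- The reverse of σ: σ^r(i) = σ(n+1-i). -/
def permReverse {n : ℕ} (σ : Equiv.Perm (Fin n)) : Equiv.Perm (Fin n) :=
  Fin.revPerm.trans σ

/-- The complement of σ: σ^c(i) = n+1-σ(i). -/
def permComplement {n : ℕ} (σ : Equiv.Perm (Fin n)) : Equiv.Perm (Fin n) :=
  σ.trans Fin.revPerm

/-- A_{2n}(x) = Σ_{σ ∈ UD_{2n}} x^{mmp^{(1,0,0,0)}(σ)}. -/
noncomputable def Apoly (n : ℕ) (x : ℤ) : ℤ :=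
  ∑ σ ∈ UDset (2 * n), x ^ mmp1000 σ

/-- B_{2n+1}(x) = Σ_{σ ∈ UD_{2n+1}} x^{mmp^{(1,0,0,0)}(σ)}. -/
noncomputable def Bpoly (n : ℕ) (x : ℤ) : ℤ :=
  ∑ σ ∈ UDset (2 * n + 1), x ^ mmp1000 σ

/-- C_{2n}(x) = Σ_{σ ∈ DU_{2n}} x^{mmp^{(1,0,0,0)}(σ)}. -/
noncomputable def Cpoly (n : ℕ) (x : ℤ) : ℤ :=
  ∑ σ ∈ DUset (2 * n), x ^ mmp1000 σ

/-- D_{2n+1}(x) = Σ_{σ ∈ DU_{2n+1}} x^{mmp^{(1,0,0,0)}(σ)}. -/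
noncomputable def Dpoly (n : ℕ) (x : ℤ) : ℤ :=
  ∑ σ ∈ DUset (2 * n + 1), x ^ mmp1000 σ

/-- Number of up-down permutations of length m. -/
noncomputable def udCount (m : ℕ) : ℕ := (UDset m).card

/-- Number of down-up permutations of length m. -/
noncomputable def duCount (m : ℕ) : ℕ := (DUset m).card

open scoped Classical in
/-- |{σ ∈ UD_{2m} : mmp^{(1,0,0,0)}(σ) = c}|. -/
noncomputable def AcountEq (m c : ℕ) : ℕ :=
  ((UDset (2 * m)).filter (fun σ => mmp1000 σ = c)).card

open scoped Classical in
/-- |{σ ∈ DU_{2m+1} : mmp^{(1,0,0,0)}(σ) = c}|. -/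
noncomputable def DcountEq (m c : ℕ) : ℕ :=
  ((DUset (2 * m + 1)).filter (fun σ => mmp1000 σ = c)).card

open scoped Classical in
/-- |{σ ∈ UD_{2m+1} : mmp^{(1,0,0,0)}(σ) = c}|. -/
noncomputable def BcountEq (m c : ℕ) : ℕ :=
  ((UDset (2 * m + 1)).filter (fun σ => mmp1000 σ = c)).card

open scoped Classical in
/-- |{σ ∈ DU_{2m} : mmp^{(1,0,0,0)}(σ) = c}|. -/
noncomputable def CcountEq (m c : ℕ) : ℕ :=
  ((DUset (2 * m)).filter (fun σ => mmp1000 σ = c)).card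



section Pattern
variable {α : Type*} [LinearOrder α] {m : ℕ}

open scoped Classical in
/-- statistic: number of i with a larger value later -/
noncomputable def statf (f : Fin m → α) : ℕ :=
  (Finset.univ.filter (fun i : Fin m => ∃ j : Fin m, i < j ∧ f i < f j)).card

def DUf (f : Fin m → α) : Prop :=
  ∀ i : Fin m, ∀ h : (i : ℕ) + 1 < m,
    if (i : ℕ) % 2 = 0 then f ⟨(i:ℕ)+1, h⟩ < f i else f i < f ⟨(i:ℕ)+1, h⟩

def UDf (f : Fin m → α) : Prop :=
  ∀ i : Fin m, ∀ h : (i : ℕ) + 1 < m,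
    if (i : ℕ) % 2 = 0 then f i < f ⟨(i:ℕ)+1, h⟩ else f ⟨(i:ℕ)+1, h⟩ < f i

variable {β : Type*} [LinearOrder β]

lemma statf_congr {f : Fin m → α} {g : Fin m → β}
    (h : ∀ i j, f i < f j ↔ g i < g j) : statf f = statf g := by
  unfold statf
  congr 1
  refine Finset.filter_congr ?_
  intro i _
  show _ ↔ _
  constructor
  · rintro ⟨j, hij, hf⟩; exact ⟨j, hij, (h i j).1 hf⟩
  · rintro ⟨j, hij, hf⟩; exact ⟨j, hij, (h i j).2 hf⟩

lemma DUf_congr {f : Fin m → α} {g : Fin m → β}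
    (h : ∀ i j, f i < f j ↔ g i < g j) : DUf f ↔ DUf g := by
  unfold DUf
  refine forall_congr' fun i => forall_congr' fun hi => ?_
  split <;> rw [h]

lemma UDf_congr {f : Fin m → α} {g : Fin m → β}
    (h : ∀ i j, f i < f j ↔ g i < g j) : UDf f ↔ UDf g := by
  unfold UDf
  refine forall_congr' fun i => forall_congr' fun hi => ?_
  split <;> rw [h]

open scoped Classical in
noncomputable def rankf (f : Fin m → α) (i : Fin m) : ℕ :=
  (Finset.univ.filter (fun j : Fin m => f j < f i)).card

lemma rankf_lt (f : Fin m → α) (i : Fin m) : rankf f i < m := by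
  classical
  have h : (Finset.univ.filter (fun j : Fin m => f j < f i)) ⊂ Finset.univ := by
    rw [Finset.ssubset_univ_iff]
    intro h
    have hi : i ∈ Finset.univ.filter (fun j : Fin m => f j < f i) := by
      rw [h]; exact Finset.mem_univ i
    simp at hi
  have := Finset.card_lt_card h
  simpa [rankf, Finset.card_univ] using this

lemma rankf_lt_rankf {f : Fin m → α} {i j : Fin m} (h : f i < f j) :
    rankf f i < rankf f j := by
  classical
  apply Finset.card_lt_card
  rw [Finset.ssubset_iff_of_subset]
  · exact ⟨i, by simp [h], by simp⟩
  · intro l hl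
    simp only [Finset.mem_filter, Finset.mem_univ, true_and] at hl ⊢
    exact hl.trans h

lemma rankf_lt_iff {f : Fin m → α} (hf : Function.Injective f) {i j : Fin m} :
    rankf f i < rankf f j ↔ f i < f j := by
  constructor
  · intro h
    rcases lt_trichotomy (f i) (f j) with h' | h' | h'
    · exact h'
    · rw [hf h'] at h; exact absurd h (lt_irrefl _)
    · exact absurd (rankf_lt_rankf h') (by omega)
  · exact rankf_lt_rankf

noncomputable def pattf (f : Fin m → α) (hf : Function.Injective f) : Equiv.Perm (Fin m) :=
  Equiv.ofBijective (fun i => (⟨rankf f i, rankf_lt f i⟩ : Fin m))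
    (Finite.injective_iff_bijective.mp (by
      intro i j h
      simp only [Fin.mk.injEq] at h
      by_contra hij
      rcases lt_trichotomy (f i) (f j) with h' | h' | h'
      · exact absurd h (by have := rankf_lt_rankf h'; omega)
      · exact hij (hf h')
      · exact absurd h (by have := rankf_lt_rankf h'; omega)))

lemma pattf_lt_iff {f : Fin m → α} (hf : Function.Injective f) (i j : Fin m) :
    f i < f j ↔ pattf f hf i < pattf f hf j := by
  rw [pattf]
  simp only [Equiv.ofBijective_apply, Fin.mk_lt_mk]
  exact (rankf_lt_iff hf).symm

end Pattern


section Pattern2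
variable {α : Type*} [LinearOrder α] {m : ℕ}

-- pattern of strictMono ∘ perm is the perm
lemma pattf_comp {g : Fin m → α} (hg : StrictMono g) (τ : Equiv.Perm (Fin m)) :
    pattf (g ∘ τ) (hg.injective.comp τ.injective) = τ := by
  set f := g ∘ τ with hf
  have hfi : Function.Injective f := hg.injective.comp τ.injective
  have key : ∀ i, rankf f i = (τ i : ℕ) := by
    intro i
    classical
    unfold rankf
    have himg : (Finset.univ.filter (fun j : Fin m => f j < f i)) =
        (Finset.univ.filter (fun j : Fin m => j < τ i)).image τ.symm := by
      ext j
      simp only [Finset.mem_filter, Finset.mem_univ, true_and, Finset.mem_image]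
      constructor
      · intro h
        refine ⟨τ j, ?_, by simp⟩
        simpa [hf, hg.lt_iff_lt] using h
      · rintro ⟨l, hl, rfl⟩
        simpa [hf, hg.lt_iff_lt] using hl
    rw [himg, Finset.card_image_of_injective _ τ.symm.injective]
    have : (Finset.univ.filter (fun j : Fin m => j < τ i)) = Finset.Iio (τ i) := by
      ext j; simp
    rw [this, Fin.card_Iio]
  ext i
  simp only [pattf, Equiv.ofBijective_apply]
  exact key i

-- factorization : f = orderEmbOfFin (image f) ∘ pattf f
lemma pattf_factor {f : Fin m → α} (hf : Function.Injective f)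
    {A : Finset α} (hAim : ∀ i, f i ∈ A) (hA : A.card = m) :
    ∀ i, A.orderEmbOfFin hA (pattf f hf i) = f i := by
  classical
  set p := pattf f hf with hp
  have hmono : StrictMono (f ∘ p.symm) := by
    intro i j hij
    have := (pattf_lt_iff hf (p.symm i) (p.symm j)).symm
    rw [Equiv.apply_symm_apply, Equiv.apply_symm_apply] at this
    exact (this.mp hij)
  have hmem : ∀ i, (f ∘ p.symm) i ∈ A := fun i => hAim _
  have := Finset.orderEmbOfFin_unique hA hmem hmono
  intro i
  have h2 := congrFun this.symm (p i)
  simpa using h2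

end Pattern2

section Extract
variable {n k m : ℕ}

/-- the top element of `Fin (2*n)` -/
def Mtop (n k m : ℕ) (h : n = k + m + 1) : Fin (2*n) := ⟨2*n-1, by omega⟩

def preF (h : n = k + m + 1) (σ : Equiv.Perm (Fin (2*n))) : Fin (2*k) → Fin (2*n) :=
  fun i => σ ⟨i, by omega⟩

def sufF (h : n = k + m + 1) (σ : Equiv.Perm (Fin (2*n))) : Fin (2*m+1) → Fin (2*n) :=
  fun l => σ ⟨2*k+1+l, by omega⟩

lemma preF_inj (h : n = k + m + 1) (σ : Equiv.Perm (Fin (2*n))) :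
    Function.Injective (preF h σ) := by
  intro i j hij
  have := congrArg Fin.val (σ.injective hij)
  simp only at this
  exact Fin.ext this

lemma sufF_inj (h : n = k + m + 1) (σ : Equiv.Perm (Fin (2*n))) :
    Function.Injective (sufF h σ) := by
  intro i j hij
  have := congrArg Fin.val (σ.injective hij)
  simp only at this
  exact Fin.ext (by omega)

lemma le_Mtop (h : n = k + m + 1) (a : Fin (2*n)) : a ≤ Mtop n k m h := by
  have := a.isLt
  exact Fin.le_def.mpr (by simp [Mtop]; omega)

lemma lt_Mtop (h : n = k + m + 1) (a : Fin (2*n)) (ha : a ≠ Mtop n k m h) :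
    a < Mtop n k m h := lt_of_le_of_ne (le_Mtop h a) ha

lemma DUf_preF (h : n = k + m + 1) (σ : Equiv.Perm (Fin (2*n))) (hσ : IsDownUp σ) :
    DUf (preF h σ) := by
  intro i hi
  have h2 : (i : ℕ) + 1 < 2*n := by omega
  have := hσ ⟨(i : ℕ), by omega⟩ h2
  exact this

lemma UDf_sufF (h : n = k + m + 1) (σ : Equiv.Perm (Fin (2*n))) (hσ : IsDownUp σ) :
    UDf (sufF h σ) := by
  intro l hl
  have h2 : (2*k+1+(l : ℕ)) + 1 < 2*n := by omega
  have hg := hσ ⟨2*k+1+(l : ℕ), by omega⟩ h2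
  simp only at hg
  by_cases hp : (l : ℕ) % 2 = 0
  · have hgp : (2*k+1+(l:ℕ)) % 2 ≠ 0 := by omega
    rw [if_neg hgp] at hg
    rw [if_pos hp]
    exact hg
  · have hgp : (2*k+1+(l:ℕ)) % 2 = 0 := by omega
    rw [if_pos hgp] at hg
    rw [if_neg hp]
    exact hg

/-- decomposition of the statistic when the max sits at position 2k -/
lemma mmp_decomp (h : n = k + m + 1) (σ : Equiv.Perm (Fin (2*n)))
    (hσM : σ ⟨2*k, by omega⟩ = Mtop n k m h) :
    mmp1000 σ = 2*k + statf (sufF h σ) := by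
  classical
  have hne : ∀ i : Fin (2*n), (i : ℕ) ≠ 2*k → σ i ≠ Mtop n k m h := by
    intro i hi hc
    apply hi
    have : i = ⟨2*k, by omega⟩ := σ.injective (hc.trans hσM.symm)
    simpa using congrArg Fin.val this
  have hsplit : (Finset.univ.filter (fun i : Fin (2*n) => ∃ j, i < j ∧ σ i < σ j)) =
      (Finset.univ.filter (fun i : Fin (2*n) => (i : ℕ) < 2*k)) ∪
      (Finset.univ.filter (fun i : Fin (2*n) => 2*k < (i : ℕ) ∧ ∃ j, i < j ∧ σ i < σ j)) := by
    ext i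
    simp only [Finset.mem_filter, Finset.mem_univ, true_and, Finset.mem_union]
    constructor
    · intro hP
      rcases lt_trichotomy ((i : ℕ)) (2*k) with hlt | heq | hgt
      · exact Or.inl hlt
      · exfalso
        obtain ⟨j, _, hij⟩ := hP
        have : i = ⟨2*k, by omega⟩ := Fin.ext heq
        rw [this, hσM] at hij
        exact absurd (le_Mtop h (σ j)) (not_le.mpr hij)
      · exact Or.inr ⟨hgt, hP⟩
    · rintro (hlt | ⟨_, hP⟩)
      · refine ⟨⟨2*k, by omega⟩, ?_, ?_⟩
        · exact Fin.lt_def.mpr (by simpa using hlt)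
        · rw [hσM]
          exact lt_Mtop h _ (hne i (by omega))
      · exact hP
  rw [mmp1000, hsplit, Finset.card_union_of_disjoint]
  · congr 1
    · -- card of first set = 2*k
      have hcard : (Finset.univ.filter (fun i : Fin (2*n) => (i : ℕ) < 2*k)).card =
          (Finset.univ : Finset (Fin (2*k))).card := by
        refine Finset.card_bij' (fun (a : Fin (2*n)) ha => (⟨(a : ℕ),
            by simpa using (Finset.mem_filter.mp ha).2⟩ : Fin (2*k)))
          (fun (l : Fin (2*k)) _ => (⟨(l : ℕ), by omega⟩ : Fin (2*n))) ?_ ?_ ?_ ?_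
        · intro a ha; exact Finset.mem_univ _
        · intro l hl
          simp only [Finset.mem_filter, Finset.mem_univ, true_and]
          exact l.isLt
        · intro a ha; exact Fin.ext rfl
        · intro l hl; exact Fin.ext rfl
      rw [hcard, Finset.card_univ, Fintype.card_fin]
    · -- card of second set = statf (sufF h σ)
      rw [statf]
      refine Finset.card_bij' (fun (a : Fin (2*n)) _ => (⟨(a : ℕ) - (2*k+1),
          by have := a.isLt; omega⟩ : Fin (2*m+1)))
        (fun (l : Fin (2*m+1)) _ => (⟨2*k+1+(l : ℕ), by omega⟩ : Fin (2*n))) ?_ ?_ ?_ ?_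
      · intro a ha
        simp only [Finset.mem_filter, Finset.mem_univ, true_and] at ha ⊢
        obtain ⟨hgt, j, haj, hσaj⟩ := ha
        have hj2k : 2*k < (j : ℕ) := by have := Fin.lt_def.mp haj; omega
        refine ⟨⟨(j : ℕ) - (2*k+1), by have := j.isLt; omega⟩, ?_, ?_⟩
        · exact Fin.lt_def.mpr (by simp only [Fin.val_mk]; omega)
        · show σ _ < σ _
          have h1 : (⟨2*k+1+((a:ℕ)-(2*k+1)), by omega⟩ : Fin (2*n)) = a :=
            Fin.ext (by simp only [Fin.val_mk]; omega)
          have h2 : (⟨2*k+1+((j:ℕ)-(2*k+1)), by omega⟩ : Fin (2*n)) = j :=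
            Fin.ext (by simp only [Fin.val_mk]; omega)
          show σ (⟨2*k+1+((a:ℕ)-(2*k+1)), _⟩ : Fin (2*n)) < σ (⟨2*k+1+((j:ℕ)-(2*k+1)), _⟩ : Fin (2*n))
          rw [h1, h2]
          exact hσaj
      · intro l hl
        simp only [Finset.mem_filter, Finset.mem_univ, true_and] at hl ⊢
        obtain ⟨l', hll', hρ⟩ := hl
        refine ⟨by show 2*k < 2*k+1+(l:ℕ); omega, ⟨2*k+1+(l' : ℕ), by omega⟩, ?_, ?_⟩
        · exact Fin.lt_def.mpr (by simp only [Fin.val_mk]; exact Nat.add_lt_add_left (Fin.lt_def.mp hll') _)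
        · exact hρ
      · intro a ha
        simp only [Finset.mem_filter, Finset.mem_univ, true_and] at ha
        exact Fin.ext (by simp only [Fin.val_mk]; omega)
      · intro l hl
        exact Fin.ext (by simp only [Fin.val_mk]; omega)
  · rw [Finset.disjoint_filter]
    intro i _ hi
    omega

end Extract

section Build
variable {n k m : ℕ}

lemma statf_coe (N : ℕ) (σ : Equiv.Perm (Fin N)) : statf (⇑σ) = mmp1000 σ := by
  unfold statf mmp1000
  congr!

lemma IsDownUp_iff_DUf (N : ℕ) (σ : Equiv.Perm (Fin N)) : IsDownUp σ ↔ DUf (⇑σ) := Iff.rfl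
lemma IsUpDown_iff_UDf (N : ℕ) (σ : Equiv.Perm (Fin N)) : IsUpDown σ ↔ UDf (⇑σ) := Iff.rfl

lemma pattf_congr_fun {α : Type*} [LinearOrder α] {M : ℕ} {f g : Fin M → α}
    (hfg : f = g) (hf : Function.Injective f) (hg : Function.Injective g) :
    pattf f hf = pattf g hg := by subst hfg; rfl

noncomputable def bFun (h : n = k + m + 1) (A : Finset (Fin (2*n))) (hA : A.card = 2*k)
    (B : Finset (Fin (2*n))) (hB : B.card = 2*m+1)
    (τ : Equiv.Perm (Fin (2*k))) (ρ : Equiv.Perm (Fin (2*m+1))) : Fin (2*n) → Fin (2*n) :=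
  fun i => if hi : (i : ℕ) < 2*k then A.orderEmbOfFin hA (τ ⟨i, hi⟩)
    else if (i : ℕ) = 2*k then Mtop n k m h
    else B.orderEmbOfFin hB (ρ ⟨(i : ℕ) - (2*k+1), by have := i.isLt; omega⟩)

lemma bFun_lt (h : n = k + m + 1) {A : Finset (Fin (2*n))} {hA : A.card = 2*k}
    {B : Finset (Fin (2*n))} {hB : B.card = 2*m+1} {τ} {ρ} {i : Fin (2*n)} (hi : (i : ℕ) < 2*k) :
    bFun h A hA B hB τ ρ i = A.orderEmbOfFin hA (τ ⟨i, hi⟩) := dif_pos hi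

lemma bFun_eq (h : n = k + m + 1) {A : Finset (Fin (2*n))} {hA : A.card = 2*k}
    {B : Finset (Fin (2*n))} {hB : B.card = 2*m+1} {τ} {ρ} {i : Fin (2*n)} (hi : (i : ℕ) = 2*k) :
    bFun h A hA B hB τ ρ i = Mtop n k m h := by
  rw [bFun, dif_neg (by omega), if_pos hi]

lemma bFun_gt (h : n = k + m + 1) {A : Finset (Fin (2*n))} {hA : A.card = 2*k}
    {B : Finset (Fin (2*n))} {hB : B.card = 2*m+1} {τ} {ρ} {i : Fin (2*n)} (hi : 2*k < (i : ℕ)) :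
    bFun h A hA B hB τ ρ i =
      B.orderEmbOfFin hB (ρ ⟨(i : ℕ) - (2*k+1), by have := i.isLt; omega⟩) := by
  rw [bFun, dif_neg (by omega), if_neg (by omega)]

lemma bFun_inj (h : n = k + m + 1) {A : Finset (Fin (2*n))} {hA : A.card = 2*k}
    {B : Finset (Fin (2*n))} {hB : B.card = 2*m+1} {τ} {ρ}
    (hAM : Mtop n k m h ∉ A) (hBM : Mtop n k m h ∉ B) (hAB : Disjoint A B) :
    Function.Injective (bFun h A hA B hB τ ρ) := by
  have memA : ∀ (i : Fin (2*n)), (i : ℕ) < 2*k → bFun h A hA B hB τ ρ i ∈ A := by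
    intro i hi; rw [bFun_lt h hi]; exact Finset.orderEmbOfFin_mem _ _ _
  have memB : ∀ (i : Fin (2*n)), 2*k < (i : ℕ) → bFun h A hA B hB τ ρ i ∈ B := by
    intro i hi; rw [bFun_gt h hi]; exact Finset.orderEmbOfFin_mem _ _ _
  have memM : ∀ (i : Fin (2*n)) (hi : (i : ℕ) = 2*k), bFun h A hA B hB τ ρ i = Mtop n k m h :=
    fun i hi => bFun_eq h hi
  intro i j hij
  rcases lt_trichotomy ((i : ℕ)) (2*k) with hi | hi | hi <;>
    rcases lt_trichotomy ((j : ℕ)) (2*k) with hj | hj | hj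
  · rw [bFun_lt h hi, bFun_lt h hj] at hij
    have := τ.injective ((A.orderEmbOfFin hA).injective hij)
    exact Fin.ext (by simpa using congrArg Fin.val this)
  · exfalso; have h1 := memA i hi; rw [hij, memM j hj] at h1; exact hAM h1
  · exfalso; have h1 := memA i hi; have h2 := memB j hj; rw [hij] at h1
    exact Finset.disjoint_left.mp hAB h1 h2
  · exfalso; have h1 := memA j hj; rw [← hij, memM i hi] at h1; exact hAM h1
  · exact Fin.ext (hi.trans hj.symm)
  · exfalso; have h1 := memB j hj; rw [← hij, memM i hi] at h1; exact hBM h1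
  · exfalso; have h1 := memA j hj; have h2 := memB i hi; rw [← hij] at h1
    exact Finset.disjoint_left.mp hAB h1 h2
  · exfalso; have h1 := memB i hi; rw [hij, memM j hj] at h1; exact hBM h1
  · rw [bFun_gt h hi, bFun_gt h hj] at hij
    have := ρ.injective ((B.orderEmbOfFin hB).injective hij)
    have h2 := congrArg Fin.val this
    simp only [Fin.val_mk] at h2
    exact Fin.ext (by omega)

noncomputable def bPerm (h : n = k + m + 1) (A : Finset (Fin (2*n))) (hA : A.card = 2*k)
    (B : Finset (Fin (2*n))) (hB : B.card = 2*m+1)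
    (τ : Equiv.Perm (Fin (2*k))) (ρ : Equiv.Perm (Fin (2*m+1)))
    (hAM : Mtop n k m h ∉ A) (hBM : Mtop n k m h ∉ B) (hAB : Disjoint A B) :
    Equiv.Perm (Fin (2*n)) :=
  Equiv.ofBijective (bFun h A hA B hB τ ρ)
    (Finite.injective_iff_bijective.mp
      (bFun_inj h (hA := hA) (hB := hB) (τ := τ) (ρ := ρ) hAM hBM hAB))

lemma bPerm_apply (h : n = k + m + 1) (A : Finset (Fin (2*n))) (hA : A.card = 2*k)
    (B : Finset (Fin (2*n))) (hB : B.card = 2*m+1) (τ) (ρ) (hAM) (hBM) (hAB) (i : Fin (2*n)) :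
    bPerm h A hA B hB τ ρ hAM hBM hAB i = bFun h A hA B hB τ ρ i := rfl

lemma bPerm_pivot (h : n = k + m + 1) (A : Finset (Fin (2*n))) (hA : A.card = 2*k)
    (B : Finset (Fin (2*n))) (hB : B.card = 2*m+1) (τ) (ρ) (hAM) (hBM) (hAB) :
    bPerm h A hA B hB τ ρ hAM hBM hAB ⟨2*k, by omega⟩ = Mtop n k m h :=
  bFun_eq h rfl

lemma bPerm_preF (h : n = k + m + 1) (A : Finset (Fin (2*n))) (hA : A.card = 2*k)
    (B : Finset (Fin (2*n))) (hB : B.card = 2*m+1) (τ) (ρ) (hAM) (hBM) (hAB) :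
    preF h (bPerm h A hA B hB τ ρ hAM hBM hAB) = (A.orderEmbOfFin hA) ∘ ⇑τ := by
  funext i
  show bFun h A hA B hB τ ρ ⟨(i : ℕ), by omega⟩ = _
  rw [bFun_lt h (by exact i.isLt)]
  simp only [Function.comp_apply]

lemma bPerm_sufF (h : n = k + m + 1) (A : Finset (Fin (2*n))) (hA : A.card = 2*k)
    (B : Finset (Fin (2*n))) (hB : B.card = 2*m+1) (τ) (ρ) (hAM) (hBM) (hAB) :
    sufF h (bPerm h A hA B hB τ ρ hAM hBM hAB) = (B.orderEmbOfFin hB) ∘ ⇑ρ := by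
  funext l
  show bFun h A hA B hB τ ρ ⟨2*k+1+(l : ℕ), by omega⟩ = _
  rw [bFun_gt h (by show 2*k < 2*k+1+(l:ℕ); omega)]
  simp only [Function.comp_apply]
  exact congrArg (B.orderEmbOfFin hB) (congrArg (⇑ρ)
    (Fin.ext (show 2*k+1+(l:ℕ) - (2*k+1) = (l:ℕ) by omega)))

lemma bPerm_isDownUp (h : n = k + m + 1) (A : Finset (Fin (2*n))) (hA : A.card = 2*k)
    (B : Finset (Fin (2*n))) (hB : B.card = 2*m+1) (τ : Equiv.Perm (Fin (2*k)))
    (ρ : Equiv.Perm (Fin (2*m+1))) (hAM) (hBM) (hAB)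
    (hτ : DUf (⇑τ)) (hρ : UDf (⇑ρ)) :
    IsDownUp (bPerm h A hA B hB τ ρ hAM hBM hAB) := by
  set σ := bPerm h A hA B hB τ ρ hAM hBM hAB with hσ
  have hmemA : ∀ i : Fin (2*n), (i : ℕ) < 2*k → σ i ∈ A := by
    intro i hi; rw [bPerm_apply, bFun_lt h hi]; exact Finset.orderEmbOfFin_mem _ _ _
  have hmemB : ∀ i : Fin (2*n), 2*k < (i : ℕ) → σ i ∈ B := by
    intro i hi; rw [bPerm_apply, bFun_gt h hi]; exact Finset.orderEmbOfFin_mem _ _ _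
  intro i hi1
  have hi1' : (i : ℕ) + 1 < 2*n := hi1
  rcases lt_trichotomy ((i : ℕ) + 1) (2*k) with hc | hc | hc
  · -- both in prefix
    have hv1 : σ i = A.orderEmbOfFin hA (τ ⟨(i : ℕ), by omega⟩) := by
      rw [bPerm_apply, bFun_lt h (by omega)]
    have hv2 : σ ⟨(i : ℕ)+1, hi1⟩ = A.orderEmbOfFin hA (τ ⟨(i : ℕ)+1, hc⟩) := by
      rw [bPerm_apply, bFun_lt h (by exact hc)]
    have hτi := hτ ⟨(i : ℕ), by omega⟩ hc
    simp only [Fin.val_mk] at hτi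
    rw [hv1, hv2]
    split <;> rename_i hp
    · rw [if_pos hp] at hτi
      exact (A.orderEmbOfFin hA).strictMono hτi
    · rw [if_neg hp] at hτi
      exact (A.orderEmbOfFin hA).strictMono hτi
  · -- i+1 = 2k : need ascent, i odd
    have hp : (i : ℕ) % 2 ≠ 0 := by omega
    rw [if_neg hp]
    have hv2 : σ ⟨(i : ℕ)+1, hi1⟩ = Mtop n k m h := by
      rw [bPerm_apply, bFun_eq h (by exact hc)]
    rw [hv2]
    exact lt_Mtop h _ (fun hcon => hAM (hcon ▸ hmemA i (by omega)))
  · rcases lt_trichotomy ((i : ℕ)) (2*k) with hc2 | hc2 | hc2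
    · omega
    · -- i = 2k : descent, i even
      have hp : (i : ℕ) % 2 = 0 := by omega
      rw [if_pos hp]
      have hv1 : σ i = Mtop n k m h := by rw [bPerm_apply, bFun_eq h hc2]
      rw [hv1]
      exact lt_Mtop h _ (fun hcon => hBM (hcon ▸ hmemB ⟨(i : ℕ)+1, hi1⟩ (by show 2*k < (i:ℕ)+1; omega)))
    · -- both in suffix
      set l : ℕ := (i : ℕ) - (2*k+1) with hl
      have hli : (i : ℕ) = 2*k+1+l := by omega
      have hlm : l + 1 < 2*m+1 := by omega
      have hv1 : σ i = sufF h σ ⟨l, by omega⟩ := by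
        show _ = σ ⟨2*k+1+l, _⟩
        congr 1
        exact Fin.ext (by simpa using hli)
      have hv2 : σ ⟨(i : ℕ)+1, hi1⟩ = sufF h σ ⟨l+1, hlm⟩ := by
        show _ = σ ⟨2*k+1+(l+1), _⟩
        congr 1
        exact Fin.ext (by show (i:ℕ)+1 = 2*k+1+(l+1); omega)
      have hsuf : UDf (sufF h σ) := by
        rw [bPerm_sufF]
        exact (UDf_congr (fun a b => by
          simp only [Function.comp_apply]
          exact ((B.orderEmbOfFin hB).strictMono.lt_iff_lt (a := ρ a) (b := ρ b)))).mpr hρ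
      have hρl := hsuf ⟨l, by omega⟩ hlm
      simp only [Fin.val_mk] at hρl
      rw [hv1, hv2]
      by_cases hp : (i : ℕ) % 2 = 0
      · rw [if_pos hp]
        rw [if_neg (by omega)] at hρl
        exact hρl
      · rw [if_neg hp]
        rw [if_pos (by omega)] at hρl
        exact hρl

end Build

section Images
variable {n k m : ℕ}

lemma orderEmbOfFin_congr {α : Type*} [LinearOrder α] {s t : Finset α} (hst : s = t) {c : ℕ}
    (hs : s.card = c) (ht : t.card = c) (i : Fin c) :
    s.orderEmbOfFin hs i = t.orderEmbOfFin ht i := by subst hst; rfl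

lemma image_orderEmbOfFin {α : Type*} [LinearOrder α] [DecidableEq α] (s : Finset α) {c : ℕ}
    (h : s.card = c) : Finset.univ.image (s.orderEmbOfFin h) = s := by
  ext a
  rw [Finset.mem_image]
  constructor
  · rintro ⟨i, _, rfl⟩; exact Finset.orderEmbOfFin_mem _ _ _
  · intro ha
    have : a ∈ Set.range (s.orderEmbOfFin h) := by
      rw [Finset.range_orderEmbOfFin]; exact ha
    obtain ⟨i, hi⟩ := this
    exact ⟨i, Finset.mem_univ _, hi⟩

lemma image_preF_subset (h : n = k + m + 1) (σ : Equiv.Perm (Fin (2*n)))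
    (hσM : σ ⟨2*k, by omega⟩ = Mtop n k m h) :
    Finset.univ.image (preF h σ) ⊆ Finset.univ.erase (Mtop n k m h) := by
  intro a ha
  rw [Finset.mem_image] at ha
  obtain ⟨i, _, rfl⟩ := ha
  rw [Finset.mem_erase]
  refine ⟨?_, Finset.mem_univ _⟩
  intro hc
  have := σ.injective (hc.trans hσM.symm)
  have := congrArg Fin.val this
  simp only [Fin.val_mk] at this
  omega

lemma card_image_preF (h : n = k + m + 1) (σ : Equiv.Perm (Fin (2*n))) :
    (Finset.univ.image (preF h σ)).card = 2*k := by
  rw [Finset.card_image_of_injective _ (preF_inj h σ), Finset.card_univ, Fintype.card_fin]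

lemma card_image_sufF (h : n = k + m + 1) (σ : Equiv.Perm (Fin (2*n))) :
    (Finset.univ.image (sufF h σ)).card = 2*m+1 := by
  rw [Finset.card_image_of_injective _ (sufF_inj h σ), Finset.card_univ, Fintype.card_fin]

lemma image_sufF_eq (h : n = k + m + 1) (σ : Equiv.Perm (Fin (2*n)))
    (hσM : σ ⟨2*k, by omega⟩ = Mtop n k m h) :
    Finset.univ.image (sufF h σ) =
      (Finset.univ.erase (Mtop n k m h)) \ (Finset.univ.image (preF h σ)) := by
  apply Finset.eq_of_subset_of_card_le
  · intro a ha
    rw [Finset.mem_image] at ha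
    obtain ⟨l, _, rfl⟩ := ha
    rw [Finset.mem_sdiff, Finset.mem_erase]
    refine ⟨⟨?_, Finset.mem_univ _⟩, ?_⟩
    · intro hc
      have := congrArg Fin.val (σ.injective (hc.trans hσM.symm))
      simp only [Fin.val_mk] at this
      omega
    · intro hc
      rw [Finset.mem_image] at hc
      obtain ⟨i, _, hi⟩ := hc
      have := congrArg Fin.val (σ.injective hi)
      simp only [Fin.val_mk] at this
      have := i.isLt
      omega
  · rw [Finset.card_sdiff_of_subset (image_preF_subset h σ hσM), card_image_preF, card_image_sufF,
      Finset.card_erase_of_mem (Finset.mem_univ _), Finset.card_univ, Fintype.card_fin]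
    omega

lemma bPerm_extract (h : n = k + m + 1) (σ : Equiv.Perm (Fin (2*n)))
    (hσM : σ ⟨2*k, by omega⟩ = Mtop n k m h)
    (hA : (Finset.univ.image (preF h σ)).card = 2*k)
    (hB : (Finset.univ.image (sufF h σ)).card = 2*m+1)
    (hAM : Mtop n k m h ∉ Finset.univ.image (preF h σ))
    (hBM : Mtop n k m h ∉ Finset.univ.image (sufF h σ))
    (hAB : Disjoint (Finset.univ.image (preF h σ)) (Finset.univ.image (sufF h σ))) :
    bPerm h _ hA _ hB (pattf (preF h σ) (preF_inj h σ)) (pattf (sufF h σ) (sufF_inj h σ))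
      hAM hBM hAB = σ := by
  apply Equiv.ext
  intro i
  rw [bPerm_apply]
  rcases lt_trichotomy ((i : ℕ)) (2*k) with hi | hi | hi
  · rw [bFun_lt h hi]
    have := pattf_factor (preF_inj h σ)
      (fun j => Finset.mem_image_of_mem _ (Finset.mem_univ j)) hA ⟨(i : ℕ), hi⟩
    rw [this]
    exact congrArg σ (Fin.ext rfl)
  · rw [bFun_eq h hi]
    rw [show i = (⟨2*k, by omega⟩ : Fin (2*n)) from Fin.ext hi]
    exact hσM.symm
  · rw [bFun_gt h hi]
    have := pattf_factor (sufF_inj h σ)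
      (fun j => Finset.mem_image_of_mem _ (Finset.mem_univ j)) hB
      ⟨(i : ℕ) - (2*k+1), by have := i.isLt; omega⟩
    rw [this]
    exact congrArg σ (Fin.ext (by show 2*k+1+((i:ℕ)-(2*k+1)) = (i:ℕ); omega))

end Images

section Main

lemma mem_DUset_iff {N : ℕ} (σ : Equiv.Perm (Fin N)) : σ ∈ DUset N ↔ IsDownUp σ := by
  classical
  simp [DUset]

lemma mem_UDset_iff {N : ℕ} (σ : Equiv.Perm (Fin N)) : σ ∈ UDset N ↔ IsUpDown σ := by
  classical
  simp [UDset]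

set_option maxHeartbeats 1000000 in
lemma fiber_sum (n k m : ℕ) (h : n = k + m + 1) (x : ℤ) :
    ∑ σ ∈ (DUset (2*n)).filter (fun σ => σ ⟨2*k, by omega⟩ = Mtop n k m h), x ^ mmp1000 σ
    = ((2*n-1).choose (2*k) : ℤ) * (duCount (2*k) : ℤ) * x^(2*k) * Bpoly m x := by
  set MT := Mtop n k m h with hMT
  set PS := (Finset.powersetCard (2*k) ((Finset.univ : Finset (Fin (2*n))).erase MT)) ×ˢ
    (DUset (2*k) ×ˢ UDset (2*m+1)) with hPS
  have key : ∑ σ ∈ (DUset (2*n)).filter (fun σ => σ ⟨2*k, by omega⟩ = MT), x ^ mmp1000 σ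
      = ∑ t ∈ PS, x ^ (2*k + mmp1000 t.2.2) := by
    refine Finset.sum_bij
      (fun σ _ => (Finset.univ.image (preF h σ),
        (pattf (preF h σ) (preF_inj h σ), pattf (sufF h σ) (sufF_inj h σ)))) ?_ ?_ ?_ ?_
    · -- maps to
      intro σ hσ
      rw [Finset.mem_filter] at hσ
      obtain ⟨hσDU, hσM⟩ := hσ
      rw [mem_DUset_iff] at hσDU
      rw [hPS, Finset.mem_product, Finset.mem_product]
      refine ⟨?_, ?_, ?_⟩
      · rw [Finset.mem_powersetCard]
        exact ⟨image_preF_subset h σ hσM, card_image_preF h σ⟩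
      · rw [mem_DUset_iff, IsDownUp_iff_DUf]
        exact (DUf_congr (fun i j => pattf_lt_iff (preF_inj h σ) i j)).mp (DUf_preF h σ hσDU)
      · rw [mem_UDset_iff, IsUpDown_iff_UDf]
        exact (UDf_congr (fun i j => pattf_lt_iff (sufF_inj h σ) i j)).mp (UDf_sufF h σ hσDU)
    · -- injective
      intro σ hσ σ' hσ' heq
      rw [Finset.mem_filter] at hσ hσ'
      obtain ⟨_, hσM⟩ := hσ
      obtain ⟨_, hσM'⟩ := hσ'
      rw [Prod.mk.injEq, Prod.mk.injEq] at heq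
      obtain ⟨hAeq, hτeq, hρeq⟩ := heq
      have hBeq : Finset.univ.image (sufF h σ) = Finset.univ.image (sufF h σ') := by
        rw [image_sufF_eq h σ hσM, image_sufF_eq h σ' hσM', hAeq]
      apply Equiv.ext
      intro i
      rcases lt_trichotomy ((i : ℕ)) (2*k) with hi | hi | hi
      · have e1 := pattf_factor (preF_inj h σ)
          (fun j => Finset.mem_image_of_mem _ (Finset.mem_univ j)) (card_image_preF h σ)
          ⟨(i : ℕ), hi⟩
        have e2 := pattf_factor (preF_inj h σ')
          (fun j => Finset.mem_image_of_mem _ (Finset.mem_univ j)) (card_image_preF h σ')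
          ⟨(i : ℕ), hi⟩
        have hv : σ i = preF h σ ⟨(i : ℕ), hi⟩ := congrArg σ (Fin.ext rfl)
        have hv' : σ' i = preF h σ' ⟨(i : ℕ), hi⟩ := congrArg σ' (Fin.ext rfl)
        have hx : pattf (preF h σ) (preF_inj h σ) ⟨(i : ℕ), hi⟩ =
            pattf (preF h σ') (preF_inj h σ') ⟨(i : ℕ), hi⟩ :=
          congrArg (fun e : Equiv.Perm (Fin (2*k)) => e ⟨(i : ℕ), hi⟩) hτeq
        have step : (Finset.univ.image (preF h σ)).orderEmbOfFin (card_image_preF h σ)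
              (pattf (preF h σ) (preF_inj h σ) ⟨(i : ℕ), hi⟩) =
            (Finset.univ.image (preF h σ')).orderEmbOfFin (card_image_preF h σ')
              (pattf (preF h σ') (preF_inj h σ') ⟨(i : ℕ), hi⟩) :=
          (congrArg _ hx).trans (orderEmbOfFin_congr hAeq _ _ _)
        exact hv.trans (e1.symm.trans (step.trans (e2.trans hv'.symm)))
      · have : i = (⟨2*k, by omega⟩ : Fin (2*n)) := Fin.ext hi
        rw [this, hσM, hσM']
      · have pf : (i : ℕ) - (2*k+1) < 2*m+1 := by have := i.isLt; omega
        have e1 := pattf_factor (sufF_inj h σ)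
          (fun j => Finset.mem_image_of_mem _ (Finset.mem_univ j)) (card_image_sufF h σ)
          ⟨(i : ℕ) - (2*k+1), pf⟩
        have e2 := pattf_factor (sufF_inj h σ')
          (fun j => Finset.mem_image_of_mem _ (Finset.mem_univ j)) (card_image_sufF h σ')
          ⟨(i : ℕ) - (2*k+1), pf⟩
        have hfin : i = (⟨2*k+1+((i : ℕ)-(2*k+1)), by have := i.isLt; omega⟩ : Fin (2*n)) :=
          Fin.ext (by simp only [Fin.val_mk]; omega)
        have hv2 : σ i = sufF h σ ⟨(i : ℕ) - (2*k+1), pf⟩ := congrArg σ hfin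
        have hv2' : σ' i = sufF h σ' ⟨(i : ℕ) - (2*k+1), pf⟩ := congrArg σ' hfin
        have hx : pattf (sufF h σ) (sufF_inj h σ) ⟨(i : ℕ) - (2*k+1), pf⟩ =
            pattf (sufF h σ') (sufF_inj h σ') ⟨(i : ℕ) - (2*k+1), pf⟩ :=
          congrArg (fun e : Equiv.Perm (Fin (2*m+1)) => e ⟨(i : ℕ) - (2*k+1), pf⟩) hρeq
        have step : (Finset.univ.image (sufF h σ)).orderEmbOfFin (card_image_sufF h σ)
              (pattf (sufF h σ) (sufF_inj h σ) ⟨(i : ℕ) - (2*k+1), pf⟩) =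
            (Finset.univ.image (sufF h σ')).orderEmbOfFin (card_image_sufF h σ')
              (pattf (sufF h σ') (sufF_inj h σ') ⟨(i : ℕ) - (2*k+1), pf⟩) :=
          (congrArg _ hx).trans (orderEmbOfFin_congr hBeq _ _ _)
        exact hv2.trans (e1.symm.trans (step.trans (e2.trans hv2'.symm)))
    · -- surjective
      rintro ⟨A, τ, ρ⟩ ht
      rw [hPS, Finset.mem_product, Finset.mem_product] at ht
      obtain ⟨hAmem, hτmem, hρmem⟩ := ht
      rw [Finset.mem_powersetCard] at hAmem
      obtain ⟨hAsub, hA⟩ := hAmem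
      set B := ((Finset.univ : Finset (Fin (2*n))).erase MT) \ A with hBdef
      have hB : B.card = 2*m+1 := by
        rw [hBdef, Finset.card_sdiff_of_subset hAsub, Finset.card_erase_of_mem (Finset.mem_univ _),
          Finset.card_univ, Fintype.card_fin, hA]
        omega
      have hAM : MT ∉ A := fun hc => (Finset.mem_erase.mp (hAsub hc)).1 rfl
      have hBM : MT ∉ B := fun hc => (Finset.mem_erase.mp (Finset.mem_sdiff.mp hc).1).1 rfl
      have hAB : Disjoint A B := Finset.disjoint_sdiff
      set σ := bPerm h A hA B hB τ ρ hAM hBM hAB with hσdef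
      have hσM : σ ⟨2*k, by omega⟩ = MT := bPerm_pivot h A hA B hB τ ρ hAM hBM hAB
      have hpre : preF h σ = (A.orderEmbOfFin hA) ∘ ⇑τ := bPerm_preF h A hA B hB τ ρ hAM hBM hAB
      have hsuf : sufF h σ = (B.orderEmbOfFin hB) ∘ ⇑ρ := bPerm_sufF h A hA B hB τ ρ hAM hBM hAB
      refine ⟨σ, ?_, ?_⟩
      · rw [Finset.mem_filter, mem_DUset_iff]
        refine ⟨?_, hσM⟩
        apply bPerm_isDownUp
        · exact (IsDownUp_iff_DUf _ _).mp ((mem_DUset_iff τ).mp hτmem)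
        · exact (IsUpDown_iff_UDf _ _).mp ((mem_UDset_iff ρ).mp hρmem)
      · rw [Prod.mk.injEq, Prod.mk.injEq]
        refine ⟨?_, ?_, ?_⟩
        · rw [hpre, ← Finset.image_image, Finset.image_univ_equiv, image_orderEmbOfFin]
        · rw [pattf_congr_fun hpre (preF_inj h σ)
            ((A.orderEmbOfFin hA).strictMono.injective.comp τ.injective)]
          exact pattf_comp (A.orderEmbOfFin hA).strictMono τ
        · rw [pattf_congr_fun hsuf (sufF_inj h σ)
            ((B.orderEmbOfFin hB).strictMono.injective.comp ρ.injective)]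
          exact pattf_comp (B.orderEmbOfFin hB).strictMono ρ
    · -- weights
      intro σ hσ
      rw [Finset.mem_filter] at hσ
      obtain ⟨_, hσM⟩ := hσ
      congr 1
      rw [mmp_decomp h σ hσM]
      congr 1
      rw [statf_congr (fun i j => pattf_lt_iff (sufF_inj h σ) i j), statf_coe]
  rw [key, hPS, Finset.sum_product]
  have hin : ∀ A ∈ Finset.powersetCard (2*k) ((Finset.univ : Finset (Fin (2*n))).erase MT),
      (∑ t ∈ DUset (2*k) ×ˢ UDset (2*m+1),
        x ^ (2*k + mmp1000 (((A, t) : _ × _ × _).2.2))) =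
      (duCount (2*k) : ℤ) * (x^(2*k) * Bpoly m x) := by
    intro A _
    rw [Finset.sum_product]
    have hρ : (∑ ρ ∈ UDset (2*m+1), x ^ (2*k + mmp1000 ρ)) = x^(2*k) * Bpoly m x := by
      rw [Bpoly, Finset.mul_sum]
      exact Finset.sum_congr rfl (fun ρ _ => pow_add x _ _)
    calc (∑ τ ∈ DUset (2*k), ∑ ρ ∈ UDset (2*m+1), x ^ (2*k + mmp1000 ρ))
        = (DUset (2*k)).card • (∑ ρ ∈ UDset (2*m+1), x ^ (2*k + mmp1000 ρ)) :=
          Finset.sum_const _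
      _ = (duCount (2*k) : ℤ) * (x^(2*k) * Bpoly m x) := by
          rw [hρ, nsmul_eq_mul, duCount]
  rw [Finset.sum_congr rfl hin, Finset.sum_const, nsmul_eq_mul, Finset.card_powersetCard,
    Finset.card_erase_of_mem (Finset.mem_univ _), Finset.card_univ, Fintype.card_fin]
  ring

lemma symm_top_even (n k m : ℕ) (h : n = k + m + 1) (σ : Equiv.Perm (Fin (2*n)))
    (hσ : IsDownUp σ) : ((σ.symm (Mtop n k m h)) : ℕ) % 2 = 0 := by
  set p := σ.symm (Mtop n k m h) with hp
  have hσp : σ p = Mtop n k m h := σ.apply_symm_apply _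
  by_contra hodd
  have hp1 : 1 ≤ (p : ℕ) := by omega
  have hlt : ((p : ℕ) - 1) + 1 < 2*n := by have := p.isLt; omega
  have := hσ ⟨(p : ℕ) - 1, by omega⟩ hlt
  rw [if_pos (by simp only [Fin.val_mk]; omega)] at this
  have heq : (⟨((p : ℕ) - 1) + 1, hlt⟩ : Fin (2*n)) = p := Fin.ext (by simp only [Fin.val_mk]; omega)
  rw [heq, hσp] at this
  exact absurd (le_Mtop h _) (not_le.mpr this)

lemma duCount_eq_udCount (N : ℕ) : duCount N = udCount N := by
  classical
  unfold duCount udCount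
  refine Finset.card_bij' (fun σ _ => σ.trans Fin.revPerm) (fun σ _ => σ.trans Fin.revPerm)
    ?_ ?_ ?_ ?_
  · intro σ hσ
    rw [mem_DUset_iff] at hσ
    rw [mem_UDset_iff]
    intro i hi
    have := hσ i hi
    show if _ then (Fin.rev _ < Fin.rev _) else (Fin.rev _ < Fin.rev _)
    split <;> rename_i hpar
    · rw [if_pos hpar] at this
      exact Fin.rev_lt_rev.mpr this
    · rw [if_neg hpar] at this
      exact Fin.rev_lt_rev.mpr this
  · intro σ hσ
    rw [mem_UDset_iff] at hσ
    rw [mem_DUset_iff]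
    intro i hi
    have := hσ i hi
    show if _ then (Fin.rev _ < Fin.rev _) else (Fin.rev _ < Fin.rev _)
    split <;> rename_i hpar
    · rw [if_pos hpar] at this
      exact Fin.rev_lt_rev.mpr this
    · rw [if_neg hpar] at this
      exact Fin.rev_lt_rev.mpr this
  · intro σ _
    apply Equiv.ext
    intro i
    simp [Fin.rev_rev]
  · intro σ _
    apply Equiv.ext
    intro i
    simp [Fin.rev_rev]

end Main

theorem stmt5 (n : ℕ) (hn : 1 ≤ n) (x : ℤ) :
    Cpoly n x = ∑ k ∈ Finset.range n,
      (Nat.choose (2 * n - 1) (2 * k) : ℤ) * (udCount (2 * k) : ℤ) *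
        x ^ (2 * k) * Bpoly (n - k - 1) x := by
  rw [Cpoly]
  have hmaps : ∀ σ ∈ DUset (2*n),
      ((σ.symm (⟨2*n-1, by omega⟩ : Fin (2*n))) : ℕ)/2 ∈ Finset.range n := by
    intro σ _
    rw [Finset.mem_range]
    have := (σ.symm (⟨2*n-1, by omega⟩ : Fin (2*n))).isLt
    omega
  rw [← Finset.sum_fiberwise_of_maps_to hmaps (fun σ => x ^ mmp1000 σ)]
  refine Finset.sum_congr rfl ?_
  intro k hk
  rw [Finset.mem_range] at hk
  have h : n = k + (n - k - 1) + 1 := by omega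
  have hfilter : (DUset (2*n)).filter
        (fun σ => ((σ.symm (⟨2*n-1, by omega⟩ : Fin (2*n))) : ℕ)/2 = k)
      = (DUset (2*n)).filter (fun σ => σ ⟨2*k, by omega⟩ = Mtop n k (n-k-1) h) := by
    refine Finset.filter_congr ?_
    intro σ hσ
    rw [mem_DUset_iff] at hσ
    have heven := symm_top_even n k (n-k-1) h σ hσ
    show _ ↔ _
    constructor
    · intro hdiv
      have hdiv' : ((σ.symm (Mtop n k (n-k-1) h)) : ℕ)/2 = k := hdiv
      have hval : ((σ.symm (Mtop n k (n-k-1) h)) : ℕ) = 2*k := by omega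
      have hsym : σ.symm (Mtop n k (n-k-1) h) = ⟨2*k, by omega⟩ := Fin.ext hval
      rw [← hsym, σ.apply_symm_apply]
    · intro hM
      have hsym : σ.symm (Mtop n k (n-k-1) h) = ⟨2*k, by omega⟩ := by
        rw [← hM, σ.symm_apply_apply]
      show ((σ.symm (Mtop n k (n-k-1) h)) : ℕ)/2 = k
      rw [hsym]
      show 2*k/2 = k
      omega
  rw [hfilter, fiber_sum n k (n-k-1) h x, duCount_eq_udCount]
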